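/- arXiv:1011.3493 — 5 statements merged into one kernel-verified Lean document; each statement's English description precedes it below -/
import Mathlib

section
/- Let Λ be a finite type of glue labels with card Λ = u, let T be a finite set of tile types t : Fin 4 → Λ, and let g : Λ → ℕ and τ ∈ ℕ with τ ≥ 1. Then there exist a strength function g' : Λ → ℕ and a temperature τ' ∈ ℕ with 1 ≤ τ' ≤ 2^(6u+6) such that for every tile type t ∈ T, D_{g',τ'}(t) = D_{g,τ}(t), i.e., the new strengths and temperature are locally equivalent to the original ones. -/
/-!
Only the sums of at most four glue strengths matter, so local equivalence asks for a new
threshold function on the multiplicity vectors `m : Λ → ℕ` with `∑ m ≤ 4` that occur. After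
capping every strength at `τ`, the scaled strengths `g / τ` together with the gap `1 / τ` form a
rational point `z` of a bounded polyhedron: accepted `m` satisfy `m ⬝ z ≥ 1`, rejected `m`
satisfy `gap + m ⬝ z ≤ 1`. Moving `z` to a vertex without decreasing the gap, `z` solves a
nonsingular square integer system whose rows have `ℓ¹`-norm at most `5`. By Cramer's rule the
determinant `q`, with `|q| ≤ 5 ^ (u + 1) ≤ 2 ^ (6u + 6)`, clears all denominators of `z`, and
`q • z` yields the new strengths with temperature `|q|`.
-/

open Finset Module Matrix Submodule

namespace Matrix

variable {n : Type*} [Fintype n] [DecidableEq n]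

theorem abv_det_le_prod_sum {R S : Type*} [CommRing R] [Nontrivial R] [CommRing S] [LinearOrder S]
    [IsStrictOrderedRing S] (A : Matrix n n R) (abv : AbsoluteValue R S) :
    abv A.det ≤ ∏ i, ∑ j, abv (A i j) := by
  rw [← det_transpose, det_apply]
  calc abv (∑ σ : Equiv.Perm n, Equiv.Perm.sign σ • ∏ i, Aᵀ (σ i) i)
      ≤ ∑ σ : Equiv.Perm n, abv (Equiv.Perm.sign σ • ∏ i, Aᵀ (σ i) i) := abv.sum_le _ _
    _ = ∑ σ : Equiv.Perm n, ∏ i, abv (A i (σ i)) := by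
      refine sum_congr rfl fun σ _ => ?_
      rw [abv.map_units_int_smul, abv.map_prod]
      rfl
    _ = ∑ f ∈ univ.map ⟨_, DFunLike.coe_injective⟩, ∏ i, abv (A i (f i)) := by
      rw [sum_map]
      rfl
    _ ≤ ∑ f : n → n, ∏ i, abv (A i (f i)) :=
      sum_le_sum_of_subset_of_nonneg (subset_univ _)
        fun _ _ _ => prod_nonneg fun _ _ => abv.nonneg _
    _ = ∏ i, ∑ j, abv (A i j) := by rw [prod_univ_sum, Fintype.piFinset_univ]

theorem map_det_smul_eq_of_map_mulVec_eq {R S : Type*} [CommRing R] [CommRing S] (f : R →+* S)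
    (A : Matrix n n R) {z : n → S} {r : n → R} (h : A.map f *ᵥ z = f ∘ r) :
    f A.det • z = f ∘ (A.adjugate *ᵥ r) := by
  ext i
  have hadj : A.adjugate.map f = (A.map f).adjugate := f.map_adjugate A
  rw [Function.comp_apply, RingHom.map_mulVec, ← h, mulVec_mulVec, hadj, adjugate_mul,
    smul_mulVec, one_mulVec, RingHom.map_det]
  rfl

end Matrix

namespace LinearConstraints

variable {K ι : Type*} [Field K] [Fintype ι]

lemma exists_ne_zero_dotProduct_eq_zero_of_span_ne_top {S : Set (ι → K)}
    (hS : span K S ≠ ⊤) : ∃ d ≠ 0, ∀ a ∈ span K S, a ⬝ᵥ d = 0 := by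
  classical
  obtain ⟨f, hf, hker⟩ := (span K S).exists_le_ker_of_lt_top hS.lt_top
  refine ⟨(dotProductEquiv K ι).symm f, by simpa using hf, fun a ha => ?_⟩
  rw [dotProduct_comm, ← dotProductEquiv_apply_apply, LinearEquiv.apply_symm_apply]
  exact hker ha

lemma dotProduct_add_smul (a z d : ι → K) (t : K) :
    a ⬝ᵥ (z + t • d) = a ⬝ᵥ z + t * (a ⬝ᵥ d) := by
  rw [dotProduct_add, dotProduct_smul, smul_eq_mul]

variable [LinearOrder K]

variable (K ι) in
def boxConstraints [DecidableEq ι] : Finset ((ι → K) × K) :=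
  univ.image (fun i => (Pi.single i 1, 0)) ∪ univ.image (fun i => (-Pi.single i 1, -1))

def Feasible (C : Finset ((ι → K) × K)) (z : ι → K) : Prop :=
  ∀ c ∈ C, c.2 ≤ c.1 ⬝ᵥ z

def tightRows (C : Finset ((ι → K) × K)) (z : ι → K) : Set (ι → K) :=
  {a | ∃ b, (a, b) ∈ C ∧ a ⬝ᵥ z = b}

lemma nonneg_of_boxConstraints_subset [DecidableEq ι] {C : Finset ((ι → K) × K)}
    (hC : boxConstraints K ι ⊆ C) {z : ι → K} (hz : Feasible C z) (i : ι) : 0 ≤ z i := by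
  simpa using hz _ (hC (mem_union_left _ (mem_image_of_mem _ (mem_univ i))))

variable [IsStrictOrderedRing K]

lemma exists_dotProduct_neg_of_boxConstraints_subset [DecidableEq ι] {C : Finset ((ι → K) × K)}
    (hC : boxConstraints K ι ⊆ C) {d : ι → K} (hd : d ≠ 0) : ∃ c ∈ C, c.1 ⬝ᵥ d < 0 := by
  obtain ⟨i, hi⟩ := Function.ne_iff.1 hd
  rcases hi.lt_or_gt with h | h
  · exact ⟨_, hC (mem_union_left _ (mem_image_of_mem _ (mem_univ i))), by simpa using h⟩
  · exact ⟨_, hC (mem_union_right _ (mem_image_of_mem _ (mem_univ i))), by simpa using h⟩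

/-- Boundedness of `C` guarantees that walking along `d` eventually makes a new constraint
tight. -/
lemma exists_feasible_add_smul {C : Finset ((ι → K) × K)}
    (hC : ∀ d ≠ 0, ∃ c ∈ C, c.1 ⬝ᵥ d < 0) {z d : ι → K} (hz : Feasible C z) (hd : d ≠ 0)
    (horth : ∀ a ∈ tightRows C z, a ⬝ᵥ d = 0) :
    ∃ t : K, 0 ≤ t ∧ Feasible C (z + t • d) ∧ tightRows C z ⊆ tightRows C (z + t • d) ∧
      ∃ a ∈ tightRows C (z + t • d), a ⬝ᵥ d ≠ 0 := by
  set slack : (ι → K) × K → K := fun c => (c.1 ⬝ᵥ z - c.2) / -(c.1 ⬝ᵥ d)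
  obtain ⟨c₀, hc₀C, hc₀d⟩ := hC d hd
  obtain ⟨c, hc, hmin⟩ := (C.filter fun c => c.1 ⬝ᵥ d < 0).exists_min_image slack
    ⟨c₀, mem_filter.2 ⟨hc₀C, hc₀d⟩⟩
  obtain ⟨hcC, hcd⟩ := mem_filter.1 hc
  have ht : 0 ≤ slack c := div_nonneg (sub_nonneg.2 (hz c hcC)) (neg_nonneg.2 hcd.le)
  refine ⟨slack c, ht, ?_, ?_, c.1, ⟨c.2, hcC, ?_⟩, hcd.ne⟩
  · intro c' hc'
    rw [dotProduct_add_smul]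
    rcases lt_or_ge (c'.1 ⬝ᵥ d) 0 with hneg | hnonneg
    · have := hmin c' (mem_filter.2 ⟨hc', hneg⟩)
      rw [le_div_iff₀ (neg_pos.2 hneg)] at this
      linarith
    · linarith [hz c' hc', mul_nonneg ht hnonneg]
  · rintro a ⟨b, hab, hb⟩
    exact ⟨b, hab, by rw [dotProduct_add_smul, horth a ⟨b, hab, hb⟩, mul_zero, add_zero, hb]⟩
  · rw [dotProduct_add_smul]
    simp only [slack]
    field_simp [hcd.ne]
    ring

theorem exists_feasible_span_tightRows_eq_top {C : Finset ((ι → K) × K)}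
    (hC : ∀ d ≠ 0, ∃ c ∈ C, c.1 ⬝ᵥ d < 0) (w : ι → K) {z₀ : ι → K} (hz₀ : Feasible C z₀) :
    ∃ z, Feasible C z ∧ w ⬝ᵥ z₀ ≤ w ⬝ᵥ z ∧ span K (tightRows C z) = ⊤ := by
  induction hn : finrank K (ι → K) - finrank K (span K (tightRows C z₀))
    using Nat.strong_induction_on generalizing z₀ with
  | _ n ih =>
  by_cases htop : span K (tightRows C z₀) = ⊤
  · exact ⟨z₀, hz₀, le_rfl, htop⟩
  obtain ⟨d₀, hd₀, horth₀⟩ := exists_ne_zero_dotProduct_eq_zero_of_span_ne_top htop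
  obtain ⟨d, hd, horth, hwd⟩ : ∃ d ≠ 0, (∀ a ∈ span K (tightRows C z₀), a ⬝ᵥ d = 0) ∧
      0 ≤ w ⬝ᵥ d := by
    rcases le_total 0 (w ⬝ᵥ d₀) with h | h
    · exact ⟨d₀, hd₀, horth₀, h⟩
    · exact ⟨-d₀, neg_ne_zero.2 hd₀, fun a ha => by simp [horth₀ a ha], by simpa using h⟩
  obtain ⟨t, ht, hfeas, hsub, a, ha, had⟩ :=
    exists_feasible_add_smul hC hz₀ hd fun a ha => horth a (subset_span ha)
  have hlt : span K (tightRows C z₀) < span K (tightRows C (z₀ + t • d)) :=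
    lt_of_le_of_ne (span_mono hsub) fun h => had (horth a (h ▸ subset_span ha))
  have := finrank_lt_finrank_of_lt hlt
  have := (span K (tightRows C (z₀ + t • d))).finrank_le
  obtain ⟨z, hz, hwz, hspan⟩ := ih _ (by omega) hfeas rfl
  refine ⟨z, hz, le_trans ?_ hwz, hspan⟩
  rw [dotProduct_add_smul]
  linarith [mul_nonneg ht hwd]

theorem exists_nat_mul_eq_intCast_of_span_tightRows_eq_top {C : Finset ((ι → ℚ) × ℚ)} (B : ℕ)
    (hC : ∀ c ∈ C, ∃ (a : ι → ℤ) (b : ℤ), c = (fun j => (a j : ℚ), (b : ℚ)) ∧ ∑ j, |a j| ≤ B)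
    {z : ι → ℚ} (hz : span ℚ (tightRows C z) = ⊤) :
    ∃ q : ℕ, 0 < q ∧ q ≤ B ^ Fintype.card ι ∧ ∃ y : ι → ℤ, ∀ i, (q : ℚ) * z i = y i := by
  classical
  -- a basis of tight rows is the row set of a nonsingular integer system solved by `z`
  let e := (Basis.ofSpan hz.ge).reindex ((Basis.ofSpan hz.ge).indexEquiv (Pi.basisFun ℚ ι))
  have he : ∀ i, e i ∈ tightRows C z := fun i => Basis.ofSpan_subset hz.ge (by simp [e])
  choose b hb hbz using he
  choose a r har haB using fun i => hC _ (hb i)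
  have hrows : (Matrix.of a).map (Int.cast : ℤ → ℚ) = Matrix.of fun i => e i := by
    ext i j
    simp [(Prod.mk.inj (har i)).1]
  have hdet : (Matrix.of a).det ≠ 0 := by
    have : IsUnit ((Matrix.of a).map (Int.cast : ℤ → ℚ)) := by
      rw [hrows, ← linearIndependent_rows_iff_isUnit]
      exact e.linearIndependent
    rw [isUnit_iff_isUnit_det, ← Int.cast_det, isUnit_iff_ne_zero] at this
    exact_mod_cast this
  have hsys : (Matrix.of a).map (Int.castRingHom ℚ) *ᵥ z = Int.castRingHom ℚ ∘ r := by
    ext i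
    have hcast : (Matrix.of a).map (Int.castRingHom ℚ) = Matrix.of fun i => e i := hrows
    rw [hcast, Function.comp_apply, eq_intCast, ← (Prod.mk.inj (har i)).2, ← hbz]
    rfl
  have hcramer : ∀ i, ((Matrix.of a).det : ℚ) * z i = ((Matrix.of a).adjugate *ᵥ r) i := by
    simpa [funext_iff] using map_det_smul_eq_of_map_mulVec_eq (Int.castRingHom ℚ) _ hsys
  refine ⟨(Matrix.of a).det.natAbs, Int.natAbs_pos.2 hdet, ?_, ?_⟩
  · have hbound : |(Matrix.of a).det| ≤ (B : ℤ) ^ Fintype.card ι :=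
      calc |(Matrix.of a).det| ≤ ∏ i, ∑ j, |a i j| :=
            abv_det_le_prod_sum (Matrix.of a) AbsoluteValue.abs
        _ ≤ ∏ _i : ι, (B : ℤ) :=
            prod_le_prod (fun _ _ => sum_nonneg fun _ _ => abs_nonneg _) fun i _ => haB i
        _ = (B : ℤ) ^ Fintype.card ι := by rw [prod_const, card_univ]
    rw [← Int.natCast_natAbs] at hbound
    exact_mod_cast hbound
  · rw [Nat.cast_natAbs]
    rcases abs_choice (Matrix.of a).det with h | h
    · exact ⟨(Matrix.of a).adjugate *ᵥ r, fun i => by rw [h, hcramer]⟩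
    · exact ⟨-((Matrix.of a).adjugate *ᵥ r), fun i => by
        rw [h, Pi.neg_apply, Int.cast_neg, Int.cast_neg, neg_mul, hcramer]⟩

end LinearConstraints

namespace Threshold

open LinearConstraints

variable {Λ : Type*}

def weightRow {R : Type*} [NatCast R] (c : R) (m : Λ → ℕ) : Option Λ → R :=
  fun i => i.elim c fun l => (m l : R)

variable [Fintype Λ]

lemma weightRow_dotProduct {R : Type*} [CommSemiring R] (c : R) (m : Λ → ℕ) (z : Option Λ → R) :
    weightRow c m ⬝ᵥ z = c * z none + ∑ l, m l * z (some l) := by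
  simp [dotProduct, Fintype.sum_option, weightRow]

lemma sum_abs_weightRow (c : ℤ) (m : Λ → ℕ) :
    ∑ j, |weightRow c m j| = |c| + ∑ l, (m l : ℤ) := by
  simp [Fintype.sum_option, weightRow]

/-- In a feasible point `z`, `z (some l)` is a normalized strength and `z none` a gap separating
every rejected sum from the threshold `1`. -/
def thresholdConstraints [DecidableEq Λ] (g : Λ → ℕ) (τ : ℕ) (M : Finset (Λ → ℕ)) :
    Finset ((Option Λ → ℚ) × ℚ) :=
  boxConstraints ℚ (Option Λ) ∪
    ({m ∈ M | τ ≤ ∑ l, m l * g l}.image fun m => (weightRow 0 m, 1)) ∪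
    ({m ∈ M | ∑ l, m l * g l < τ}.image fun m => (-weightRow 1 m, -1))

section

variable [DecidableEq Λ] {g : Λ → ℕ} {τ : ℕ} {M : Finset (Λ → ℕ)}

lemma mem_thresholdConstraints {c : (Option Λ → ℚ) × ℚ} :
    c ∈ thresholdConstraints g τ M ↔ c ∈ boxConstraints ℚ (Option Λ) ∨
      (∃ m ∈ M, τ ≤ ∑ l, m l * g l ∧ c = (weightRow 0 m, 1)) ∨
      (∃ m ∈ M, ∑ l, m l * g l < τ ∧ c = (-weightRow 1 m, -1)) := by
  simp only [thresholdConstraints, mem_union, mem_image, mem_filter, and_assoc, eq_comm (a := c),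
    or_assoc]

lemma feasible_thresholdConstraints (hτ : 1 ≤ τ) (hg : ∀ l, g l ≤ τ) :
    Feasible (thresholdConstraints g τ M) ((τ : ℚ)⁻¹ • weightRow 1 g) := by
  have hτ' : (0 : ℚ) < τ := by positivity
  have hdot : ∀ (c : ℚ) (m : Λ → ℕ), weightRow c m ⬝ᵥ ((τ : ℚ)⁻¹ • weightRow 1 g) =
      (c + ∑ l, (m l * g l : ℕ)) / τ := by
    intro c m
    rw [dotProduct_smul, weightRow_dotProduct, smul_eq_mul, inv_mul_eq_div]
    simp [weightRow]
  intro c hc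
  rcases mem_thresholdConstraints.1 hc with hbox | ⟨m, -, hacc, rfl⟩ | ⟨m, -, hrej, rfl⟩
  · simp only [boxConstraints, mem_union, mem_image, mem_univ, true_and] at hbox
    rcases hbox with ⟨i, rfl⟩ | ⟨i, rfl⟩ <;> cases i <;> simp only [single_dotProduct,
      neg_dotProduct, neg_le_neg_iff, one_mul, mul_one, Pi.smul_apply, smul_eq_mul, weightRow,
      Option.elim_none, Option.elim_some]
    · positivity
    · positivity
    · exact inv_le_one_of_one_le₀ (Nat.one_le_cast.2 hτ : (1 : ℚ) ≤ τ)
    · exact inv_mul_le_one_of_le₀ (by exact_mod_cast hg _) hτ'.le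
  · rw [hdot, le_div_iff₀ hτ', zero_add, one_mul]
    exact_mod_cast hacc
  · rw [neg_dotProduct, hdot, neg_le_neg_iff, div_le_one hτ']
    exact_mod_cast Nat.one_add_le_iff.2 hrej

lemma one_le_sum_iff_of_feasible {z : Option Λ → ℚ}
    (hz : Feasible (thresholdConstraints g τ M) z) (hgap : 0 < z none) {m : Λ → ℕ} (hm : m ∈ M) :
    1 ≤ ∑ l, m l * z (some l) ↔ τ ≤ ∑ l, m l * g l := by
  rcases le_or_gt τ (∑ l, m l * g l) with hacc | hrej
  · have := hz _ (mem_thresholdConstraints.2 (Or.inr (Or.inl ⟨m, hm, hacc, rfl⟩)))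
    simp only [weightRow_dotProduct, zero_mul, zero_add] at this
    exact iff_of_true this hacc
  · have := hz _ (mem_thresholdConstraints.2 (Or.inr (Or.inr ⟨m, hm, hrej, rfl⟩)))
    simp only [neg_dotProduct, neg_le_neg_iff, weightRow_dotProduct, one_mul] at this
    exact iff_of_false (by linarith) hrej.not_ge

lemma exists_intCast_of_mem_thresholdConstraints {k : ℕ} (hM : ∀ m ∈ M, ∑ l, m l ≤ k)
    {c : (Option Λ → ℚ) × ℚ} (hc : c ∈ thresholdConstraints g τ M) :
    ∃ (a : Option Λ → ℤ) (b : ℤ), c = (fun j => (a j : ℚ), (b : ℚ)) ∧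
      ∑ j, |a j| ≤ (k + 1 : ℕ) := by
  rcases mem_thresholdConstraints.1 hc with hbox | ⟨m, hm, -, rfl⟩ | ⟨m, hm, -, rfl⟩
  · simp only [boxConstraints, mem_union, mem_image, mem_univ, true_and] at hbox
    rcases hbox with ⟨i, rfl⟩ | ⟨i, rfl⟩
    · refine ⟨Pi.single i 1, 0, ?_, ?_⟩
      · ext j <;> simp [Pi.single_apply, apply_ite]
      · simp [Pi.single_apply, apply_ite]
    · refine ⟨-Pi.single i 1, -1, ?_, ?_⟩
      · ext j <;> simp [Pi.single_apply, apply_ite]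
      · simp [Pi.single_apply, apply_ite]
  all_goals
    have hmk : ((∑ l, m l : ℕ) : ℤ) ≤ k := by exact_mod_cast hM m hm
    push_cast at hmk
  · refine ⟨weightRow 0 m, 1, ?_, ?_⟩
    · ext (_ | _) <;> simp [weightRow]
    · rw [sum_abs_weightRow, abs_zero]
      push_cast
      linarith
  · refine ⟨-weightRow 1 m, -1, ?_, ?_⟩
    · ext (_ | _) <;> simp [weightRow]
    · simp only [Pi.neg_apply, abs_neg, sum_abs_weightRow, abs_one]
      push_cast
      linarith

end

theorem exists_small_equivalent_threshold (g : Λ → ℕ) (τ k : ℕ) (hτ : 1 ≤ τ)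
    (hg : ∀ l, g l ≤ τ) (M : Finset (Λ → ℕ)) (hM : ∀ m ∈ M, ∑ l, m l ≤ k) :
    ∃ (g' : Λ → ℕ) (q : ℕ), 0 < q ∧ q ≤ (k + 1) ^ (Fintype.card Λ + 1) ∧
      ∀ m ∈ M, (q ≤ ∑ l, m l * g' l ↔ τ ≤ ∑ l, m l * g l) := by
  classical
  have hbox : boxConstraints ℚ (Option Λ) ⊆ thresholdConstraints g τ M :=
    subset_union_left.trans subset_union_left
  obtain ⟨z, hz, hgap, hspan⟩ := exists_feasible_span_tightRows_eq_top
    (fun _ hd => exists_dotProduct_neg_of_boxConstraints_subset hbox hd) (Pi.single none 1)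
    (feasible_thresholdConstraints hτ hg)
  have hgap : 0 < z none := by
    simp only [single_dotProduct, one_mul, Pi.smul_apply, smul_eq_mul, weightRow,
      Option.elim_none, mul_one] at hgap
    exact lt_of_lt_of_le (by positivity) hgap
  obtain ⟨q, hq, hqk, y, hy⟩ := exists_nat_mul_eq_intCast_of_span_tightRows_eq_top (k + 1)
    (fun _ hc => exists_intCast_of_mem_thresholdConstraints hM hc) hspan
  have hy_nonneg : ∀ i, 0 ≤ y i := fun i => by
    have := mul_nonneg q.cast_nonneg (nonneg_of_boxConstraints_subset hbox hz i)
    rw [hy] at this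
    exact_mod_cast this
  refine ⟨fun l => (y (some l)).toNat, q, hq, by rwa [Fintype.card_option] at hqk, fun m hm => ?_⟩
  have hscale : ((∑ l, m l * (y (some l)).toNat : ℕ) : ℚ) = q * ∑ l, m l * z (some l) := by
    rw [mul_sum]
    push_cast
    refine sum_congr rfl fun l _ => ?_
    have hl : ((y (some l)).toNat : ℚ) = y (some l) := by
      exact_mod_cast Int.toNat_of_nonneg (hy_nonneg _)
    rw [hl, ← hy]
    ring
  rw [← one_le_sum_iff_of_feasible hz hgap hm, ← Nat.cast_le (α := ℚ), hscale,
    le_mul_iff_one_le_right (by exact_mod_cast hq)]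

end Threshold

lemma le_sum_min_iff {α : Type*} (s : Finset α) (f : α → ℕ) (τ : ℕ) :
    τ ≤ ∑ a ∈ s, min (f a) τ ↔ τ ≤ ∑ a ∈ s, f a := by
  by_cases hbig : ∃ a ∈ s, τ ≤ f a
  · obtain ⟨a, ha, hfa⟩ := hbig
    refine iff_of_true ?_ ?_
    · exact (min_eq_right hfa).symm.le.trans
        (single_le_sum (f := fun a => min (f a) τ) (fun _ _ => Nat.zero_le _) ha)
    · exact hfa.trans (single_le_sum (fun _ _ => Nat.zero_le _) ha)
  · push Not at hbig
    rw [sum_congr rfl fun a ha => min_eq_left (hbig a ha).le]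

lemma sum_comp_eq_sum_card_filter_mul {α β : Type*} [Fintype β] [DecidableEq β] (s : Finset α)
    (t : α → β) (h : β → ℕ) : ∑ a ∈ s, h (t a) = ∑ b, #{a ∈ s | t a = b} * h b := by
  rw [← sum_fiberwise' s t]
  simp only [sum_const, smul_eq_mul]

/-- for any strength function and temperature on a finite glue
alphabet of cardinality `u`, there are a locally equivalent strength function
and temperature with the temperature at most `2^(6u+6)`. -/
theorem exists_locally_equivalent_small_temperature
    (Λ : Type) [Fintype Λ] (u : ℕ) (hu : Fintype.card Λ = u)
    (T : Finset (Fin 4 → Λ)) (g : Λ → ℕ) (τ : ℕ) (hτ : 1 ≤ τ) :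
    ∃ (g' : Λ → ℕ) (τ' : ℕ), 1 ≤ τ' ∧ τ' ≤ 2 ^ (6 * u + 6) ∧
      ∀ t ∈ T, ∀ D : Finset (Fin 4),
        (τ' ≤ ∑ d ∈ D, g' (t d)) ↔ (τ ≤ ∑ d ∈ D, g (t d)) := by
  classical
  let mult (t : Fin 4 → Λ) (D : Finset (Fin 4)) (l : Λ) : ℕ := #{d ∈ D | t d = l}
  have hsum t D (h : Λ → ℕ) : ∑ d ∈ D, h (t d) = ∑ l, mult t D l * h l :=
    sum_comp_eq_sum_card_filter_mul D t h
  have hmult t D : ∑ l, mult t D l ≤ 4 := by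
    have hcard := hsum t D 1
    simp only [Pi.one_apply, mul_one, sum_const, smul_eq_mul] at hcard
    simpa [← hcard] using D.card_le_univ
  obtain ⟨g', q, hq, hqu, hiff⟩ := Threshold.exists_small_equivalent_threshold
    (fun l => min (g l) τ) τ 4 hτ (fun _ => min_le_right _ _)
    ((T ×ˢ univ).image fun p => mult p.1 p.2)
    (by simp only [mem_image]; rintro _ ⟨p, -, rfl⟩; exact hmult p.1 p.2)
  refine ⟨g', q, hq, hqu.trans ?_, fun t ht D => ?_⟩
  · subst hu
    calc (4 + 1) ^ (Fintype.card Λ + 1) ≤ (2 ^ 6) ^ (Fintype.card Λ + 1) :=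
          Nat.pow_le_pow_left (by norm_num) _
      _ = 2 ^ (6 * Fintype.card Λ + 6) := by rw [← pow_mul]; ring_nf
  · rw [hsum t D g', hiff (mult t D) (mem_image.2 ⟨(t, D), mem_product.2 ⟨ht, mem_univ D⟩, rfl⟩),
      ← hsum t D, le_sum_min_iff]
end

section
/- For every positive integer n, there exist a finite set T of tile types with |T| = 4n (tile types being functions t : Fin 4 → ℕ, with ℕ as the glue-label type), a strength function g : ℕ → ℕ, and a temperature τ ∈ ℕ with τ ≥ 1, such that for every strength function g' : ℕ → ℕ and every temperature τ' ∈ ℕ with τ' ≥ 1 satisfying D_{g',τ'}(t) = D_{g,τ}(t) for all t ∈ T, one has τ' ≥ 2^n. -/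
open Finset

/-!
For `k < n` the gadget tile `(k, k, k + 1, n + 1 + k)` has strengths
`(2^k - 1, 2^k - 1, 2^(k+1) - 1, 2^n - 2^(k+1) + 1)` at temperature `2^n`: its sides `{0, 1, 3}`
fall one short of binding while `{2, 3}` bind exactly. Any locally equivalent `(g', τ')` must
therefore satisfy `2 g' k + g' c < τ' ≤ g' (k + 1) + g' c`, so `g' (k + 1) > 2 g' k`, whence
`g' k ≥ 2^k - 1`; side `2` alone does not bind, so `τ' > g' (k + 1) ≥ 2^(k+1) - 1`.
The remaining `3n` tiles are padding with fresh glues.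
-/

theorem two_pow_le_succ_of_two_mul_lt {f : ℕ → ℕ} {m : ℕ}
    (hf : ∀ k < m, 2 * f k < f (k + 1)) : ∀ k ≤ m, 2 ^ k ≤ f k + 1 := by
  intro k hk
  induction k with
  | zero => simp
  | succ k ih =>
    have := ih (by omega)
    have := hf k (by omega)
    rw [pow_succ]
    omega

def SameCooperation {Λ : Type*} (g' : Λ → ℕ) (τ' : ℕ) (g : Λ → ℕ) (τ : ℕ) (t : Fin 4 → Λ) :
    Prop :=
  ∀ D : Finset (Fin 4), τ' ≤ ∑ d ∈ D, g' (t d) ↔ τ ≤ ∑ d ∈ D, g (t d)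

namespace ExponentialTemperature

variable (n : ℕ)

def gadget (k : ℕ) : Fin 4 → ℕ := ![k, k, k + 1, n + 1 + k]

def strength (m : ℕ) : ℕ :=
  if m ≤ n then 2 ^ m - 1 else if m ≤ 2 * n then 2 ^ n - 2 ^ (m - n) + 1 else 0

def gadgets : Finset (Fin 4 → ℕ) := (range n).image (gadget n)

def fillers : Finset (Fin 4 → ℕ) := (range (3 * n)).image fun j _ => 2 * n + 1 + j

def tileSet : Finset (Fin 4 → ℕ) := gadgets n ∪ fillers n

variable {n}

theorem gadget_injective : Function.Injective (gadget n) := fun a b h => by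
  simpa [gadget] using congrFun h 0

theorem card_tileSet : (tileSet n).card = 4 * n := by
  have hdisj : Disjoint (gadgets n) (fillers n) := by
    simp only [gadgets, fillers, disjoint_left, mem_image, mem_range]
    rintro _ ⟨k, hk, rfl⟩ ⟨j, -, hj⟩
    have := congrFun hj 0
    simp [gadget] at this
    omega
  have hfill : Function.Injective fun j (_ : Fin 4) => 2 * n + 1 + j := fun a b h => by
    simpa using congrFun h 0
  rw [tileSet, card_union_of_disjoint hdisj, gadgets, fillers,
    card_image_of_injective _ gadget_injective, card_image_of_injective _ hfill,
    card_range, card_range]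
  ring

theorem gadget_mem_tileSet {k : ℕ} (hk : k < n) : gadget n k ∈ tileSet n :=
  mem_union_left _ (mem_image_of_mem _ (mem_range.2 hk))

theorem strength_of_le {m : ℕ} (hm : m ≤ n) : strength n m = 2 ^ m - 1 := by
  simp [strength, hm]

theorem strength_complement {k : ℕ} (hk : k < n) :
    strength n (n + 1 + k) = 2 ^ n - 2 ^ (k + 1) + 1 := by
  rw [strength, if_neg (by omega), if_pos (by omega), show n + 1 + k - n = k + 1 by omega]

theorem sum_gadget_left (f : ℕ → ℕ) (k : ℕ) :
    ∑ d ∈ ({0, 1, 3} : Finset (Fin 4)), f (gadget n k d) = 2 * f k + f (n + 1 + k) := by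
  simp [gadget]
  ring

theorem sum_gadget_right (f : ℕ → ℕ) (k : ℕ) :
    ∑ d ∈ ({2, 3} : Finset (Fin 4)), f (gadget n k d) = f (k + 1) + f (n + 1 + k) := by
  simp [gadget]

theorem sum_gadget_top (f : ℕ → ℕ) (k : ℕ) :
    ∑ d ∈ ({2} : Finset (Fin 4)), f (gadget n k d) = f (k + 1) := by
  simp [gadget]

theorem doubling_of_sameCooperation_gadget {g' : ℕ → ℕ} {τ' k : ℕ} (hk : k < n)
    (hequiv : SameCooperation g' τ' (strength n) (2 ^ n) (gadget n k)) :
    2 * g' k < g' (k + 1) ∧ g' (k + 1) < τ' := by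
  have hleft := hequiv {0, 1, 3}
  have hright := hequiv {2, 3}
  have htop := hequiv {2}
  rw [sum_gadget_left, sum_gadget_left, strength_of_le hk.le, strength_complement hk] at hleft
  rw [sum_gadget_right, sum_gadget_right, strength_of_le hk, strength_complement hk] at hright
  rw [sum_gadget_top, sum_gadget_top, strength_of_le hk] at htop
  have : 1 ≤ 2 ^ k := Nat.one_le_two_pow
  have : 2 ^ (k + 1) ≤ 2 ^ n := Nat.pow_le_pow_right two_pos hk
  rw [pow_succ] at *
  omega

theorem two_pow_succ_le_of_sameCooperation_tileSet {g' : ℕ → ℕ} {τ' : ℕ}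
    (hequiv : ∀ t ∈ tileSet n, SameCooperation g' τ' (strength n) (2 ^ n) t)
    {k : ℕ} (hk : k < n) : 2 ^ (k + 1) ≤ τ' := by
  have hdouble k (hk : k < n) :=
    doubling_of_sameCooperation_gadget hk (hequiv _ (gadget_mem_tileSet hk))
  have := two_pow_le_succ_of_two_mul_lt (fun k hk => (hdouble k hk).1) (k + 1) hk
  have := (hdouble k hk).2
  omega

end ExponentialTemperature

theorem exists_TAS_requiring_exponential_temperature_general
    (n : ℕ) :
    ∃ (T : Finset (Fin 4 → ℕ)) (g : ℕ → ℕ) (τ : ℕ),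
      T.card = 4 * n ∧ 1 ≤ τ ∧
      ∀ (g' : ℕ → ℕ) (τ' : ℕ), 1 ≤ τ' →
        (∀ t ∈ T, ∀ D : Finset (Fin 4),
          (τ' ≤ ∑ d ∈ D, g' (t d)) ↔ (τ ≤ ∑ d ∈ D, g (t d))) →
        2 ^ n ≤ τ' := by
  refine ⟨ExponentialTemperature.tileSet n, ExponentialTemperature.strength n, 2 ^ n,
    ExponentialTemperature.card_tileSet, Nat.one_le_two_pow, ?_⟩
  intro g' τ' hτ' hequiv
  cases n with
  | zero => simpa using hτ'
  | succ m =>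
    exact ExponentialTemperature.two_pow_succ_le_of_sameCooperation_tileSet hequiv m.lt_succ_self

/-- for every positive `n` there is a tile set of `4n` tile types
with a strength function and temperature such that any locally equivalent
strength function and temperature has temperature at least `2^n`. -/
theorem exists_TAS_requiring_exponential_temperature
    (n : ℕ) (hn : 0 < n) :
    ∃ (T : Finset (Fin 4 → ℕ)) (g : ℕ → ℕ) (τ : ℕ),
      T.card = 4 * n ∧ 1 ≤ τ ∧
      ∀ (g' : ℕ → ℕ) (τ' : ℕ), 1 ≤ τ' →
        (∀ t ∈ T, ∀ D : Finset (Fin 4),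
          (τ' ≤ ∑ d ∈ D, g' (t d)) ↔ (τ ≤ ∑ d ∈ D, g (t d))) →
        2 ^ n ≤ τ' :=
  exists_TAS_requiring_exponential_temperature_general n
end

section
/- Let n ≥ 1 be a natural number, let τ ∈ ℕ, and let A, A', A'', B', B'' : ℕ → ℕ satisfy the following inequalities. Base case: A'(1) + B'(1) ≥ τ, A(1) + B'(1) < τ, A''(1) + B''(1) ≥ τ, and A'(1) + B''(1) < τ. Inductive constraints: for every i with 2 ≤ i ≤ n, A'(i) + A(i-1) + B'(i) ≥ τ, A''(i-1) + A(i) + B'(i) < τ, A''(i) + A(i-1) + B''(i) ≥ τ, and A''(i-1) + A'(i) + B''(i) < τ. Then A''(n) ≥ A(n) + 2^n. -/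
/-- the arithmetic core of the exponential temperature lower
bound: the staged binding/non-binding inequalities force `A''(n) ≥ A(n) + 2^n`. -/
theorem staged_inequalities_force_exponential_gap
    (n : ℕ) (hn : 1 ≤ n) (τ : ℕ) (A A' A'' B' B'' : ℕ → ℕ)
    (h1 : τ ≤ A' 1 + B' 1) (h2 : A 1 + B' 1 < τ)
    (h3 : τ ≤ A'' 1 + B'' 1) (h4 : A' 1 + B'' 1 < τ)
    (h5 : ∀ i, 2 ≤ i → i ≤ n → τ ≤ A' i + A (i - 1) + B' i)
    (h6 : ∀ i, 2 ≤ i → i ≤ n → A'' (i - 1) + A i + B' i < τ)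
    (h7 : ∀ i, 2 ≤ i → i ≤ n → τ ≤ A'' i + A (i - 1) + B'' i)
    (h8 : ∀ i, 2 ≤ i → i ≤ n → A'' (i - 1) + A' i + B'' i < τ) :
    A n + 2 ^ n ≤ A'' n := by
  induction n with
  | zero => omega
  | succ m ih =>
    rcases Nat.eq_zero_or_pos m with hm | hm
    · subst hm
      norm_num
      omega
    · have IH := ih hm
        (fun i a b => h5 i a (Nat.le_succ_of_le b))
        (fun i a b => h6 i a (Nat.le_succ_of_le b))
        (fun i a b => h7 i a (Nat.le_succ_of_le b))
        (fun i a b => h8 i a (Nat.le_succ_of_le b))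
      have H5 := h5 (m + 1) (by omega) le_rfl
      have H6 := h6 (m + 1) (by omega) le_rfl
      have H7 := h7 (m + 1) (by omega) le_rfl
      have H8 := h8 (m + 1) (by omega) le_rfl
      simp only [Nat.add_sub_cancel] at H5 H6 H7 H8
      have hp : 2 ^ (m + 1) = 2 ^ m + 2 ^ m := by ring
      omega
end

section
/- Let Λ be a finite type of glue labels, g : Λ → ℕ a strength function, and τ ∈ ℕ with τ ≥ 1. Let n be the number of distinct values v such that v = g(σ) for some σ ∈ Λ, 0 < v, and 2v < τ (i.e., the number of distinct positive strengths strictly below τ/2). Set τ' = 2n + 2. Then there exists a strength function g' : Λ → ℕ such that: (1) for every σ ∈ Λ, g(σ) ≥ τ if and only if g'(σ) ≥ τ'; and (2) for every pair σ, σ' ∈ Λ, g(σ) + g(σ') ≥ τ if and only if g'(σ) + g'(σ') ≥ τ'. -/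
/-!
Let `S` be the set of positive strengths below `τ/2`, `n = #S`. A small strength `v` is relabelled
by its rank in `S`, and a strength `w ∈ [τ/2, τ)` by `n + 1` plus the number of elements of `S`
it reaches `τ` with. Since the partners of `w` form an upper segment of `S` and the elements of
rank at most that of `v` a lower segment, the two segments overlap exactly when `v` is a partner
of `w`, i.e. exactly when the new strengths add up to more than `2n + 1`.
-/

namespace Finset

variable {α : Type*} [LinearOrder α] {s : Finset α} {p : α → Prop} [DecidablePred p]

lemma card_filter_add_card_filter_le_le_card (hp : Monotone p) {a : α} (ha : ¬p a) :
    #(s.filter p) + #(s.filter (· ≤ a)) ≤ #s := by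
  have hsub : s.filter (· ≤ a) ⊆ s.filter (¬p ·) :=
    monotone_filter_right s fun _ _ hxa hpx => ha (hp hxa hpx)
  have := card_le_card hsub
  have := card_filter_add_card_filter_not (s := s) p
  omega

lemma card_lt_card_filter_add_card_filter_le (hp : Monotone p) {a : α} (has : a ∈ s)
    (ha : p a) : #s < #(s.filter p) + #(s.filter (· ≤ a)) := by
  have hsub : s.filter (¬p ·) ⊆ s.filter (· ≤ a) :=
    monotone_filter_right s fun _ _ hx => le_of_lt (lt_of_not_ge fun hax => hx (hp hax ha))
  have hssub : s.filter (¬p ·) ⊂ s.filter (· ≤ a) :=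
    (ssubset_iff_of_subset hsub).2 ⟨a, mem_filter.2 ⟨has, le_rfl⟩, fun h => (mem_filter.1 h).2 ha⟩
  have := card_lt_card hssub
  have := card_filter_add_card_filter_not (s := s) p
  omega

end Finset

open Finset

namespace StrengthRelabel

variable (S : Finset ℕ) (τ : ℕ)

def rank (v : ℕ) : ℕ := #(S.filter (· ≤ v))

def partners (w : ℕ) : ℕ := #(S.filter (τ ≤ w + ·))

def relabel (v : ℕ) : ℕ :=
  if τ ≤ v then 2 * #S + 2 else if 2 * v < τ then rank S v else #S + 1 + partners S τ v

lemma rank_le (v : ℕ) : rank S v ≤ #S := card_filter_le _ _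

lemma partners_le (w : ℕ) : partners S τ w ≤ #S := card_filter_le _ _

variable {S τ}

lemma le_iff_le_relabel (v : ℕ) : τ ≤ v ↔ 2 * #S + 2 ≤ relabel S τ v := by
  have := rank_le S v
  have := partners_le S τ v
  unfold relabel
  split_ifs <;> omega

lemma le_add_iff_of_small_of_medium {v w : ℕ} (hv : 2 * v < τ) (hvS : 0 < v → v ∈ S)
    (hw : w < τ) (hw2 : τ ≤ 2 * w) :
    τ ≤ v + w ↔ 2 * #S + 2 ≤ relabel S τ v + relabel S τ w := by
  have hmono : Monotone (τ ≤ w + ·) := fun _ _ h h' => h'.trans (by omega)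
  have hrel : relabel S τ v + relabel S τ w = #S + 1 + (partners S τ w + rank S v) := by
    simp only [relabel, if_neg (show ¬τ ≤ v by omega), if_pos hv, if_neg (show ¬τ ≤ w by omega),
      if_neg (show ¬2 * w < τ by omega)]
    ring
  rw [hrel]
  by_cases hvw : τ ≤ v + w
  · have := card_lt_card_filter_add_card_filter_le hmono (hvS (by omega)) (by omega)
    simp only [partners, rank]
    omega
  · have := card_filter_add_card_filter_le_le_card (s := S) hmono (a := v) (by omega)
    simp only [partners, rank]
    omega

lemma le_add_iff_le_relabel_add {v w : ℕ} (hvS : 0 < v → 2 * v < τ → v ∈ S)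
    (hwS : 0 < w → 2 * w < τ → w ∈ S) :
    τ ≤ v + w ↔ 2 * #S + 2 ≤ relabel S τ v + relabel S τ w := by
  by_cases hv : τ ≤ v
  · have := (le_iff_le_relabel (S := S) v).1 hv
    omega
  by_cases hw : τ ≤ w
  · have := (le_iff_le_relabel (S := S) w).1 hw
    omega
  rcases lt_or_ge (2 * v) τ with hv2 | hv2 <;> rcases lt_or_ge (2 * w) τ with hw2 | hw2
  · simp only [relabel, if_neg hv, if_neg hw, if_pos hv2, if_pos hw2]
    have := rank_le S v
    have := rank_le S w
    omega
  · exact le_add_iff_of_small_of_medium hv2 (hvS · hv2) (by omega) hw2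
  · rw [add_comm v, add_comm (relabel S τ v)]
    exact le_add_iff_of_small_of_medium hw2 (hwS · hw2) (by omega) hv2
  · simp only [relabel, if_neg hv, if_neg hw, if_neg (not_lt.2 hv2), if_neg (not_lt.2 hw2)]
    omega

end StrengthRelabel

open StrengthRelabel in
theorem strength_relabeling_two_cooperative_general
    (Λ : Type) [Fintype Λ] (g : Λ → ℕ) (τ : ℕ)
    (n : ℕ)
    (hn : n = ((Finset.univ.image g).filter (fun v => 0 < v ∧ 2 * v < τ)).card) :
    ∃ g' : Λ → ℕ,
      (∀ σ : Λ, τ ≤ g σ ↔ 2 * n + 2 ≤ g' σ) ∧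
      (∀ σ σ' : Λ, τ ≤ g σ + g σ' ↔ 2 * n + 2 ≤ g' σ + g' σ') := by
  set S := (Finset.univ.image g).filter (fun v => 0 < v ∧ 2 * v < τ)
  have hS (σ : Λ) : 0 < g σ → 2 * g σ < τ → g σ ∈ S := fun h1 h2 =>
    mem_filter.2 ⟨mem_image_of_mem g (mem_univ σ), h1, h2⟩
  subst hn
  exact ⟨relabel S τ ∘ g, fun σ => le_iff_le_relabel (g σ),
    fun σ σ' => le_add_iff_le_relabel_add (hS σ) (hS σ')⟩

/-- the key relabeling lemma for 2-cooperative equivalence: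
strengths can be replaced by strengths bounded by `2n + 2`, where `n` is the
number of distinct positive strengths strictly below `τ/2`, preserving which
single glues and which pairs of glues reach the temperature. -/
theorem strength_relabeling_two_cooperative
    (Λ : Type) [Fintype Λ] (g : Λ → ℕ) (τ : ℕ) (hτ : 1 ≤ τ)
    (n : ℕ)
    (hn : n = ((Finset.univ.image g).filter (fun v => 0 < v ∧ 2 * v < τ)).card) :
    ∃ g' : Λ → ℕ,
      (∀ σ : Λ, τ ≤ g σ ↔ 2 * n + 2 ≤ g' σ) ∧
      (∀ σ σ' : Λ, τ ≤ g σ + g σ' ↔ 2 * n + 2 ≤ g' σ + g' σ') :=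
  strength_relabeling_two_cooperative_general Λ g τ n hn
end

section
/- Let c and x be real numbers with c ≥ 1 and x ≥ 4, and let k = c · logb 2 x / logb 2 (logb 2 x). Assume 1 ≤ k and k ≤ x. Then k^(4k+2) ≤ x^(4c · logb 2 c + 4c + 2), where both sides use real exponentiation. -/
open Real

/-!
Take `logb 2` of both sides and write `L = logb 2 x`. The summand `2 logb 2 k` is at most `2 L`
because `k ≤ x`. For the other summand, `logb 2 k = logb 2 c + logb 2 L - logb 2 (logb 2 L)`
and the last term is nonnegative, so `k logb 2 k ≤ k logb 2 c + k logb 2 L = k logb 2 c + c L`;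
finally `k ≤ c L` since `logb 2 L ≥ 1`.
-/

namespace Real

variable {b : ℝ}

theorem rpow_le_rpow_of_mul_logb_le (hb : 1 < b) {x y s t : ℝ} (hx : 0 < x) (hy : 0 < y)
    (h : s * logb b x ≤ t * logb b y) : x ^ s ≤ y ^ t := by
  rwa [← logb_le_logb hb (rpow_pos_of_pos hx s) (rpow_pos_of_pos hy t),
    logb_rpow_eq_mul_logb_of_pos hx, logb_rpow_eq_mul_logb_of_pos hy]

theorem mul_logb_div_logb_le (hb : 1 < b) {c y : ℝ} (hc : 0 < c) (hy : 0 < y)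
    (hly : 1 ≤ logb b y) :
    c * y / logb b y * logb b (c * y / logb b y) ≤
      c * y / logb b y * logb b c + c * y := by
  set k := c * y / logb b y
  have hk : 0 ≤ k := by positivity
  have hlogb_k : logb b k ≤ logb b c + logb b y := by
    rw [logb_div (by positivity) (by positivity), logb_mul hc.ne' hy.ne']
    linarith [logb_nonneg hb hly]
  have hk_logb_y : k * logb b y = c * y := div_mul_cancel₀ _ (by positivity)
  calc k * logb b k ≤ k * (logb b c + logb b y) := mul_le_mul_of_nonneg_left hlogb_k hk
    _ = k * logb b c + c * y := by rw [mul_add, hk_logb_y]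

end Real

theorem one_le_logb_two_logb_two {x : ℝ} (hx : 4 ≤ x) : 1 ≤ logb 2 (logb 2 x) := by
  have hL : 2 ≤ logb 2 x :=
    (le_logb_iff_rpow_le one_lt_two (by linarith)).2 (by norm_num; linarith)
  exact (le_logb_iff_rpow_le one_lt_two (by linarith)).2 (by norm_num; linarith)

theorem k_pow_4k_add_2_le_general
    (c x : ℝ) (hc : 1 ≤ c) (hx : 4 ≤ x)
    (k : ℝ) (hk : k = c * logb 2 x / logb 2 (logb 2 x))
    (hkx : k ≤ x) :
    k ^ (4 * k + 2) ≤ x ^ (4 * c * logb 2 c + 4 * c + 2) := by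
  set L := logb 2 x
  have hLL : 1 ≤ logb 2 L := one_le_logb_two_logb_two hx
  have hL : 0 < L := logb_pos one_lt_two (by linarith)
  have hk0 : 0 < k := by rw [hk]; positivity
  have hk_le : k ≤ c * L := by rw [hk]; exact div_le_self (by positivity) hLL
  have hk_logb_k : k * logb 2 k ≤ k * logb 2 c + c * L := by
    rw [hk]; exact mul_logb_div_logb_le one_lt_two (by linarith) hL hLL
  have h_logb_k : logb 2 k ≤ L := logb_le_logb_of_le one_lt_two hk0 hkx
  have h_logb_c : k * logb 2 c ≤ c * L * logb 2 c :=
    mul_le_mul_of_nonneg_right hk_le (logb_nonneg one_lt_two hc)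
  refine rpow_le_rpow_of_mul_logb_le one_lt_two hk0 (by linarith) ?_
  linarith

/-- `k^(4k+2) ≤ x^(4c·log₂ c + 4c + 2)` for
`k = c·log₂ x / log₂ log₂ x`, when `c ≥ 1`, `x ≥ 4`, `1 ≤ k ≤ x`. -/
theorem k_pow_4k_add_2_le
    (c x : ℝ) (hc : 1 ≤ c) (hx : 4 ≤ x)
    (k : ℝ) (hk : k = c * logb 2 x / logb 2 (logb 2 x))
    (hk1 : 1 ≤ k) (hkx : k ≤ x) :
    k ^ (4 * k + 2) ≤ x ^ (4 * c * logb 2 c + 4 * c + 2) :=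
  k_pow_4k_add_2_le_general c x hc hx k hk hkx
end
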